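/- Let V be a finite-dimensional complex vector space and let U_r be the set of tuples (B1, B2, v1, ..., vr) where B1, B2 are commuting nilpotent endomorphisms of V and there is no proper subspace of V that is invariant under both B1 and B2 and contains all of v1, ..., vr. Then the natural action of GL(V) on U_r (by conjugation on B1, B2 and by application on the vectors v_i) is free: if g ∈ GL(V) fixes a point of U_r, then g = 1. -/
import Mathlib


/-- Freeness of the `GL(V)` action on cyclic tuples `(B₁, B₂, v₁, …, v_r)` of
commuting nilpotent endomorphisms together with a generating system of vectors. -/
theorem stmt0 {V : Type*} [AddCommGroup V] [Module ℂ V] [FiniteDimensional ℂ V]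
    (B1 B2 : Module.End ℂ V) (hn1 : IsNilpotent B1) (hn2 : IsNilpotent B2)
    (hcomm : Commute B1 B2) {r : ℕ} (v : Fin r → V)
    (hcyc : ∀ p : Submodule ℂ V, (∀ x ∈ p, B1 x ∈ p) → (∀ x ∈ p, B2 x ∈ p) →
      (∀ i, v i ∈ p) → p = ⊤)
    (g : V ≃ₗ[ℂ] V)
    (h1 : ∀ x, g (B1 (g.symm x)) = B1 x)
    (h2 : ∀ x, g (B2 (g.symm x)) = B2 x)
    (hv : ∀ i, g (v i) = v i) :
    g = LinearEquiv.refl ℂ V := by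
  set p : Submodule ℂ V := LinearMap.ker ((g : V →ₗ[ℂ] V) - LinearMap.id) with hp
  have hmem : ∀ x : V, x ∈ p ↔ g x = x := by
    intro x
    simp [hp, LinearMap.mem_ker, sub_eq_zero]
  have hB1 : ∀ x ∈ p, B1 x ∈ p := by
    intro x hx
    rw [hmem] at hx ⊢
    have := h1 (g x)
    rwa [g.symm_apply_apply, hx] at this
  have hB2 : ∀ x ∈ p, B2 x ∈ p := by
    intro x hx
    rw [hmem] at hx ⊢
    have := h2 (g x)
    rwa [g.symm_apply_apply, hx] at this
  have hvp : ∀ i, v i ∈ p := fun i => (hmem _).2 (hv i)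
  have htop := hcyc p hB1 hB2 hvp
  ext x
  have : x ∈ p := htop ▸ Submodule.mem_top
  simpa using (hmem x).1 this
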